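/- With the notation of Proposition zk, there exists a constant C_κ > 0 depending only on α and κ such that for every integer ℓ > 0 and every x ∈ S_⋆, and every N > 2ℓ, | N^α Σ_{η ∈ E_N : η_x ≥ N - ℓ} m_⋆^η/a(η) − Z_{N,S}/κ_⋆ | ≤ C_κ / ℓ^{α-1}. -/

import Mathlib

noncomputable def aZR (α : ℝ) (n : ℕ) : ℝ := if n = 0 then 1 else (n : ℝ) ^ α

def confs (S : Type*) [Fintype S] [DecidableEq S] (N : ℕ) : Finset (S → ℕ) :=
  (Fintype.piFinset fun _ => Finset.range (N + 1)).filter (fun η => ∑ x, η x = N)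

/-!
For `N > 2ℓ` the events `{η_y ≥ N - ℓ}`, `y ∈ S⋆`, are disjoint, and they all have the same
weight because swapping `x` and `y` preserves `m⋆`. Hence the difference to estimate is `N^α / κ⋆`
times the weight of the configurations in none of these events. Such a configuration has a site
`z` carrying at least `N / κ` particles, whose factor `a(η_z)⁻¹ ≤ (κ / N)^α` absorbs `N^α`. Either
`z ∉ S⋆`, and then `m⋆(z)^{η_z}` decays geometrically in `η_z > ℓ / κ`, or another site carries
more than `ℓ / κ` particles, and summing over its occupation gives a tail
`∑_{n > ℓ/κ} n^{-α} = O(ℓ^{1-α})`. Since `η_z` is determined by the other occupations, the remaining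
sites contribute at most `(∑ₙ a(n)⁻¹)^κ`.
-/

open Finset Real Filter

lemma Finset.sum_le_sum_sum_filter_of_forall_exists {ι β M : Type*} [AddCommMonoid M]
    [PartialOrder M] [IsOrderedAddMonoid M] {s : Finset β} {t : Finset ι} {f : β → M}
    (hf : ∀ b ∈ s, 0 ≤ f b) (P : ι → β → Prop) [∀ i, DecidablePred (P i)]
    (hP : ∀ b ∈ s, ∃ i ∈ t, P i b) :
    ∑ b ∈ s, f b ≤ ∑ i ∈ t, ∑ b ∈ s.filter (P i), f b := by
  simp_rw [sum_filter]
  rw [sum_comm]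
  refine sum_le_sum fun b hb => ?_
  obtain ⟨i, hi, hPi⟩ := hP b hb
  calc f b = if P i b then f b else 0 := (if_pos hPi).symm
    _ ≤ _ := single_le_sum (f := fun i => if P i b then f b else 0)
        (fun _ _ => by split_ifs <;> simp [hf b hb]) hi

section Configurations

variable {S : Type*} [Fintype S] [DecidableEq S] {N : ℕ} {η : S → ℕ}

lemma mem_confs_iff : η ∈ confs S N ↔ ∑ x, η x = N := by
  refine ⟨fun h => (mem_filter.1 h).2, fun h => mem_filter.2 ⟨?_, h⟩⟩
  refine Fintype.mem_piFinset.2 fun x => mem_range.2 <| Nat.lt_succ_of_le ?_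
  exact h ▸ single_le_sum (fun _ _ => Nat.zero_le _) (mem_univ x)

lemma comp_perm_mem_confs (σ : Equiv.Perm S) (hη : η ∈ confs S N) : η ∘ σ ∈ confs S N :=
  mem_confs_iff.2 <| (Equiv.sum_comp σ η).trans (mem_confs_iff.1 hη)

lemma add_le_of_mem_confs {x y : S} (hxy : x ≠ y) (hη : η ∈ confs S N) : η x + η y ≤ N := by
  rw [← mem_confs_iff.1 hη, ← sum_pair hxy]
  exact sum_le_sum_of_subset (subset_univ _)

lemma add_sum_erase_of_mem_confs (z : S) (hη : η ∈ confs S N) :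
    η z + ∑ y ∈ univ.erase z, η y = N := by
  rw [add_sum_erase _ _ (mem_univ z), mem_confs_iff.1 hη]

lemma eq_of_mem_confs_of_forall_ne {η' : S → ℕ} (hη : η ∈ confs S N) (hη' : η' ∈ confs S N)
    {z : S} (h : ∀ y ≠ z, η y = η' y) : η = η' := by
  have hz : η z = η' z := by
    have := (add_sum_erase_of_mem_confs z hη).trans (add_sum_erase_of_mem_confs z hη').symm
    rwa [sum_congr rfl fun y hy => h y (ne_of_mem_erase hy), add_left_inj] at this
  funext y
  exact if hy : y = z then hy ▸ hz else h y hy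

lemma exists_le_card_mul_of_mem_confs [Nonempty S] (hη : η ∈ confs S N) :
    ∃ z, N ≤ Fintype.card S * η z := by
  obtain ⟨z, -, hz⟩ := exists_le_of_sum_le (f := fun _ => N) (g := fun z => Fintype.card S * η z)
    univ_nonempty (by rw [← mul_sum, mem_confs_iff.1 hη, sum_const, card_univ, smul_eq_mul])
  exact ⟨z, hz⟩

lemma exists_lt_card_mul_of_mem_confs (hη : η ∈ confs S N) {z : S} {ℓ : ℕ} (h : η z + ℓ < N) :
    ∃ y ≠ z, ℓ < Fintype.card S * η y := by
  have hκ : 0 < Fintype.card S := Fintype.card_pos_iff.2 ⟨z⟩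
  have hrest := add_sum_erase_of_mem_confs z hη
  obtain ⟨y, hy, hlt⟩ := exists_lt_of_sum_lt (s := univ.erase z) (f := fun _ => ℓ)
    (g := fun y => Fintype.card S * η y) <| by
      rw [← mul_sum, sum_const, card_erase_of_mem (mem_univ z), card_univ, smul_eq_mul]
      calc (Fintype.card S - 1) * ℓ ≤ Fintype.card S * ℓ := Nat.mul_le_mul_right _ (Nat.sub_le _ _)
        _ < _ := Nat.mul_lt_mul_of_pos_left (by omega) hκ
  exact ⟨y, ne_of_mem_erase hy, hlt⟩

lemma exists_large_sites_of_mem_confs [Nonempty S] {T : Finset S} {ℓ : ℕ} (hN : 2 * ℓ < N)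
    (hη : η ∈ confs S N) (hT : ∀ y ∈ T, η y + ℓ < N) :
    ∃ z z', N ≤ Fintype.card S * η z ∧ ℓ < Fintype.card S * η z' ∧ (z' = z → z ∉ T) := by
  obtain ⟨z, hz⟩ := exists_le_card_mul_of_mem_confs hη
  by_cases hzT : z ∈ T
  · obtain ⟨z', hz', hlt⟩ := exists_lt_card_mul_of_mem_confs hη (hT z hzT)
    exact ⟨z, z', hz, hlt, fun h => absurd h hz'⟩
  · exact ⟨z, z, hz, by omega, fun _ => hzT⟩

lemma sum_prod_erase_le_prod_sum {T : Finset (S → ℕ)} (hT : T ⊆ confs S N) (z : S)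
    {g : S → ℕ → ℝ} (hg : ∀ y n, 0 ≤ g y n) {t : S → Finset ℕ}
    (ht : ∀ η ∈ T, ∀ y ≠ z, η y ∈ t y) :
    ∑ η ∈ T, ∏ y ∈ univ.erase z, g y (η y) ≤ ∏ y ∈ univ.erase z, ∑ n ∈ t y, g y n := by
  set g' : S → ℕ → ℝ := fun y n => if y = z then 1 else g y n
  have hg' (η : S → ℕ) : ∏ y, g' y (η y) = ∏ y ∈ univ.erase z, g y (η y) := by
    rw [← mul_prod_erase univ _ (mem_univ z)]
    simp only [g', if_pos rfl, one_mul]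
    exact prod_congr rfl fun y hy => if_neg (ne_of_mem_erase hy)
  set ψ : (S → ℕ) → (S → ℕ) := fun η => Function.update η z 0
  have hψ (η : S → ℕ) : ∏ y, g' y (ψ η y) = ∏ y, g' y (η y) :=
    prod_congr rfl fun y _ => by
      by_cases hy : y = z
      · simp [g', hy]
      · simp [ψ, Function.update_of_ne hy]
  have hinj : Set.InjOn ψ T := fun η hη η' hη' he =>
    eq_of_mem_confs_of_forall_ne (z := z) (hT hη) (hT hη') fun y hy => by
      simpa only [ψ, Function.update_of_ne hy] using congrFun he y
  calc ∑ η ∈ T, ∏ y ∈ univ.erase z, g y (η y)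
      = ∑ η ∈ T.image ψ, ∏ y, g' y (η y) := by
        rw [sum_image hinj]
        exact sum_congr rfl fun η _ => by rw [hψ, hg']
    _ ≤ ∑ η ∈ Fintype.piFinset (Function.update t z {0}), ∏ y, g' y (η y) := by
        refine sum_le_sum_of_subset_of_nonneg ?_ fun η _ _ =>
          prod_nonneg fun y _ => by by_cases hy : y = z <;> simp [g', hy, hg]
        intro η' hη'
        obtain ⟨η, hη, rfl⟩ := mem_image.1 hη'
        refine Fintype.mem_piFinset.2 fun y => ?_
        by_cases hy : y = z
        · simp [ψ, hy]
        · simpa [ψ, Function.update_of_ne hy] using ht η hη y hy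
    _ = ∏ y, ∑ n ∈ Function.update t z {0} y, g' y n := (prod_univ_sum _ _).symm
    _ = ∏ y ∈ univ.erase z, ∑ n ∈ t y, g y n := by
        rw [← mul_prod_erase univ _ (mem_univ z)]
        simp only [Function.update_self, sum_singleton, g', if_pos rfl, one_mul]
        refine prod_congr rfl fun y hy => ?_
        rw [Function.update_of_ne (ne_of_mem_erase hy)]
        exact sum_congr rfl fun n _ => if_neg (ne_of_mem_erase hy)

lemma sum_prod_le_mul_prod_sum {T : Finset (S → ℕ)} (hT : T ⊆ confs S N) {z : S}
    {f : S → ℕ → ℝ} (hf : ∀ y n, 0 ≤ f y n) {c : ℝ} (hc0 : 0 ≤ c) (hc : ∀ η ∈ T, f z (η z) ≤ c)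
    {t : S → Finset ℕ} (ht : ∀ η ∈ T, ∀ y ≠ z, η y ∈ t y) :
    ∑ η ∈ T, ∏ y, f y (η y) ≤ c * ∏ y ∈ univ.erase z, ∑ n ∈ t y, f y n :=
  calc ∑ η ∈ T, ∏ y, f y (η y) = ∑ η ∈ T, f z (η z) * ∏ y ∈ univ.erase z, f y (η y) :=
        sum_congr rfl fun _ _ => (mul_prod_erase _ _ (mem_univ z)).symm
    _ ≤ ∑ η ∈ T, c * ∏ y ∈ univ.erase z, f y (η y) :=
        sum_le_sum fun η hη => mul_le_mul_of_nonneg_right (hc η hη) (prod_nonneg fun _ _ => hf _ _)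
    _ = c * ∑ η ∈ T, ∏ y ∈ univ.erase z, f y (η y) := (mul_sum _ _ _).symm
    _ ≤ c * ∏ y ∈ univ.erase z, ∑ n ∈ t y, f y n :=
        mul_le_mul_of_nonneg_left (sum_prod_erase_le_prod_sum hT z hf ht) hc0

end Configurations

noncomputable def confWeight {S : Type*} [Fintype S] (α : ℝ) (r : S → ℝ) (η : S → ℕ) : ℝ :=
  ∏ z, r z ^ η z / aZR α (η z)

lemma confWeight_comp_perm {S : Type*} [Fintype S] {α : ℝ} {r : S → ℝ} (σ : Equiv.Perm S)
    (hr : ∀ z, r (σ z) = r z) (η : S → ℕ) :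
    confWeight α r (η ∘ σ) = confWeight α r η := by
  unfold confWeight
  rw [← Equiv.prod_comp σ.symm]
  exact prod_congr rfl fun z _ => by
    rw [Function.comp_apply, Equiv.apply_symm_apply, ← hr (σ.symm z), Equiv.apply_symm_apply]

section Symmetry

variable {S : Type*} [Fintype S] [DecidableEq S] {N : ℕ} {α : ℝ} {r : S → ℝ}

lemma sum_confs_filter_comp_perm (σ : Equiv.Perm S) (hr : ∀ z, r (σ z) = r z)
    (P : (S → ℕ) → Prop) [DecidablePred P] :
    ∑ η ∈ (confs S N).filter P, confWeight α r η =
      ∑ η ∈ (confs S N).filter (fun η => P (η ∘ σ)), confWeight α r η := by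
  refine sum_nbij' (· ∘ σ.symm) (· ∘ σ) (fun η hη => ?_) (fun η hη => ?_) (fun η _ => ?_)
    (fun η _ => ?_) (fun η _ => ?_)
  · obtain ⟨hη, hP⟩ := mem_filter.1 hη
    refine mem_filter.2 ⟨comp_perm_mem_confs _ hη, ?_⟩
    simpa [Function.comp_assoc] using hP
  · obtain ⟨hη, hP⟩ := mem_filter.1 hη
    exact mem_filter.2 ⟨comp_perm_mem_confs _ hη, hP⟩
  · simp [Function.comp_assoc]
  · simp [Function.comp_assoc]
  · exact (confWeight_comp_perm σ.symm (fun z => by rw [← hr, Equiv.apply_symm_apply]) η).symm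

lemma sum_filter_exists_le_eq_card_mul {T : Finset S} {x : S} (hT : ∀ y ∈ T, r y = r x)
    {ℓ : ℕ} (hN : 2 * ℓ < N) :
    ∑ η ∈ (confs S N).filter (fun η => ∃ y ∈ T, N - ℓ ≤ η y), confWeight α r η =
      T.card * ∑ η ∈ (confs S N).filter (fun η => N - ℓ ≤ η x), confWeight α r η := by
  have hunion : (confs S N).filter (fun η => ∃ y ∈ T, N - ℓ ≤ η y) =
      T.biUnion fun y => (confs S N).filter (fun η => N - ℓ ≤ η y) := by
    ext η
    simp only [mem_filter, mem_biUnion]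
    tauto
  have hdisj : (T : Set S).PairwiseDisjoint fun y => (confs S N).filter (fun η => N - ℓ ≤ η y) :=
    fun y _ y' _ hne => disjoint_filter.2 fun η hη h h' => by
      have := add_le_of_mem_confs hne hη
      omega
  rw [hunion, sum_biUnion hdisj, ← nsmul_eq_mul, ← sum_const]
  refine sum_congr rfl fun y hy => ?_
  have hswap (z : S) : r (Equiv.swap x y z) = r z := by
    rcases eq_or_ne z x with rfl | hzx
    · rw [Equiv.swap_apply_left, hT y hy]
    rcases eq_or_ne z y with rfl | hzy
    · rw [Equiv.swap_apply_right, hT z hy]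
    · rw [Equiv.swap_apply_of_ne_of_ne hzx hzy]
  rw [sum_confs_filter_comp_perm (Equiv.swap x y) hswap]
  simp [Equiv.swap_apply_right]

end Symmetry

section Weights

variable {α : ℝ}

lemma aZR_pos (α : ℝ) (n : ℕ) : 0 < aZR α n := by
  unfold aZR
  split_ifs with hn
  · exact one_pos
  · exact rpow_pos_of_pos (Nat.cast_pos.2 (Nat.pos_of_ne_zero hn)) α

lemma aZR_of_ne_zero (α : ℝ) {n : ℕ} (hn : n ≠ 0) : aZR α n = (n : ℝ) ^ α := if_neg hn

lemma inv_aZR_le_inv_rpow (hα : 0 ≤ α) {x : ℝ} (hx : 0 < x) {n : ℕ} (hxn : x ≤ n) :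
    (aZR α n)⁻¹ ≤ (x ^ α)⁻¹ := by
  have hn : n ≠ 0 := by
    rintro rfl
    exact (hx.trans_le hxn).ne' Nat.cast_zero
  rw [aZR_of_ne_zero α hn]
  gcongr

lemma inv_aZR_le_two_rpow_mul (hα : 0 ≤ α) (n : ℕ) :
    (aZR α n)⁻¹ ≤ 2 ^ α * (((n + 1 : ℕ) : ℝ) ^ α)⁻¹ := by
  rcases eq_or_ne n 0 with rfl | hn
  · simp [aZR, one_le_rpow (by norm_num : (1 : ℝ) ≤ 2) hα]
  have hn1 : (1 : ℝ) ≤ n := Nat.one_le_cast.2 (Nat.pos_of_ne_zero hn)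
  calc (aZR α n)⁻¹ = 2 ^ α * ((2 * n : ℝ) ^ α)⁻¹ := by
        rw [aZR_of_ne_zero α hn, mul_rpow zero_le_two (by positivity), mul_inv, ← mul_assoc,
          mul_inv_cancel₀ (by positivity), one_mul]
    _ ≤ 2 ^ α * (((n + 1 : ℕ) : ℝ) ^ α)⁻¹ := by
        gcongr
        push_cast
        linarith

lemma summable_inv_aZR (hα : 1 < α) : Summable fun n => (aZR α n)⁻¹ := by
  refine .of_nonneg_of_le (fun n => (inv_pos.2 (aZR_pos α n)).le)
    (inv_aZR_le_two_rpow_mul (by linarith)) (.mul_left _ ?_)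
  exact (summable_nat_add_iff 1).2 (Real.summable_nat_rpow_inv.2 hα)

lemma sum_inv_aZR_le_tsum (hα : 1 < α) (s : Finset ℕ) :
    ∑ n ∈ s, (aZR α n)⁻¹ ≤ ∑' n, (aZR α n)⁻¹ :=
  (summable_inv_aZR hα).sum_le_tsum s fun n _ => (inv_pos.2 (aZR_pos α n)).le

lemma one_le_tsum_inv_aZR (hα : 1 < α) : 1 ≤ ∑' n, (aZR α n)⁻¹ := by
  simpa [aZR] using sum_inv_aZR_le_tsum hα {0}

lemma pow_div_aZR_le_inv {r : ℝ} (hr0 : 0 ≤ r) (hr1 : r ≤ 1) (n : ℕ) :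
    r ^ n / aZR α n ≤ (aZR α n)⁻¹ := by
  rw [div_eq_mul_inv]
  exact mul_le_of_le_one_left (inv_pos.2 (aZR_pos α n)).le (pow_le_one₀ hr0 hr1)

lemma sum_filter_lt_inv_aZR_le (hα : 1 < α) {u : ℝ} (hu : 0 < u) (M : ℕ) :
    ∑ n ∈ (range M).filter (fun n : ℕ => u < n), (aZR α n)⁻¹ ≤ 2 ^ α / (α - 1) * u ^ (1 - α) := by
  set a := ⌊u⌋₊ + 1
  have ha : (0 : ℝ) < a := by positivity
  have hua : u ≤ a := by exact_mod_cast (Nat.lt_floor_add_one u).le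
  have hsub : (range M).filter (fun n : ℕ => u < n) ⊆ Ico a M := fun n hn => by
    obtain ⟨hnM, hun⟩ := mem_filter.1 hn
    exact mem_Ico.2 ⟨(Nat.floor_lt hu.le).2 hun, mem_range.1 hnM⟩
  have hint : ∫ x in Set.Ioi (a : ℝ), x ^ (-α) = (a : ℝ) ^ (1 - α) / (α - 1) := by
    rw [integral_Ioi_rpow_of_lt (by linarith) ha, neg_add_eq_sub, ← neg_div_neg_eq, neg_neg,
      neg_sub]
  -- the shift `n ↦ n + 1` keeps the integral test away from the singularity of `x ^ (-α)` at 0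
  calc ∑ n ∈ (range M).filter (fun n : ℕ => u < n), (aZR α n)⁻¹
      ≤ ∑ n ∈ Ico a M, 2 ^ α * ((n + 1 : ℕ) : ℝ) ^ (-α) := by
        refine sum_le_sum_of_subset_of_nonneg hsub (fun n _ _ => by positivity) |>.trans' ?_
        refine sum_le_sum fun n _ => ?_
        rw [rpow_neg (Nat.cast_nonneg _)]
        exact inv_aZR_le_two_rpow_mul (by linarith) n
    _ ≤ 2 ^ α * ∫ x in Set.Ioi (a : ℝ), x ^ (-α) := by
        rw [← mul_sum]
        gcongr
        refine AntitoneOn.sum_Ico_le_integral ?_ (integrableOn_Ioi_rpow_of_lt (by linarith) ha)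
          fun t ht => (rpow_pos_of_pos (ha.trans ht) _).le
        exact (antitoneOn_rpow_Ioi_of_exponent_nonpos (by linarith)).mono
          fun t ht => ha.trans_le ht.1
    _ ≤ 2 ^ α / (α - 1) * u ^ (1 - α) := by
        rw [hint, mul_div_assoc', div_mul_eq_mul_div]
        refine div_le_div_of_nonneg_right (mul_le_mul_of_nonneg_left ?_ (by positivity))
          (by linarith)
        exact rpow_le_rpow_of_nonpos hu hua (by linarith)

lemma exists_forall_rpow_mul_pow_le {ι : Type*} [Finite ι] (s : ℝ) {r : ι → ℝ}
    (hr0 : ∀ i, 0 ≤ r i) : ∃ B, ∀ i, r i < 1 → ∀ n : ℕ, 1 ≤ n → (n : ℝ) ^ s * r i ^ n ≤ B := by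
  refine (eventually_all.2 fun i => ?_ : ∀ᶠ B in atTop, ∀ i, _).exists
  by_cases hi : r i < 1
  · obtain ⟨B, hB⟩ := (tendsto_pow_const_mul_const_pow_of_lt_one ⌈s⌉₊ (hr0 i) hi).bddAbove_range
    filter_upwards [eventually_ge_atTop B] with B' hB' _ n hn
    refine (mul_le_mul_of_nonneg_right ?_ (pow_nonneg (hr0 i) n)).trans ((hB ⟨n, rfl⟩).trans hB')
    rw [← rpow_natCast]
    exact rpow_le_rpow_of_exponent_le (Nat.one_le_cast.2 hn) (Nat.le_ceil s)
  · exact .of_forall fun _ h => absurd h hi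

lemma prod_sum_pow_div_aZR_le {S : Type*} [Fintype S] {r : S → ℝ} (hα : 1 < α)
    (hr0 : ∀ z, 0 ≤ r z) (hr1 : ∀ z, r z ≤ 1)
    (s : Finset S) (t : S → Finset ℕ) :
    ∏ z ∈ s, ∑ n ∈ t z, r z ^ n / aZR α n ≤ (∑' n, (aZR α n)⁻¹) ^ Fintype.card S :=
  calc ∏ z ∈ s, ∑ n ∈ t z, r z ^ n / aZR α n ≤ ∏ _z ∈ s, ∑' n, (aZR α n)⁻¹ :=
        prod_le_prod (fun z _ => sum_nonneg fun n _ =>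
          div_nonneg (pow_nonneg (hr0 z) n) (aZR_pos α n).le) fun z _ =>
          (sum_le_sum fun n _ => pow_div_aZR_le_inv (hr0 z) (hr1 z) n).trans
            (sum_inv_aZR_le_tsum hα _)
    _ ≤ (∑' n, (aZR α n)⁻¹) ^ Fintype.card S := by
        rw [prod_const]
        exact pow_le_pow_right₀ (one_le_tsum_inv_aZR hα) (card_le_univ s)

lemma confWeight_nonneg {S : Type*} [Fintype S] {α : ℝ} {r : S → ℝ} (hr0 : ∀ z, 0 ≤ r z)
    (η : S → ℕ) : 0 ≤ confWeight α r η :=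
  prod_nonneg fun z _ => div_nonneg (pow_nonneg (hr0 z) _) (aZR_pos α _).le

end Weights

section Estimates

variable {S : Type*} [Fintype S] [DecidableEq S] {N : ℕ} {α : ℝ} {r : S → ℝ}

lemma sum_confWeight_le_of_large_site (hα : 1 < α) (hr0 : ∀ z, 0 ≤ r z) (hr1 : ∀ z, r z ≤ 1)
    {T : Finset (S → ℕ)} (hT : T ⊆ confs S N) {z : S} {B x u : ℝ}
    (hB : ∀ n : ℕ, 1 ≤ n → (n : ℝ) ^ (α - 1) * r z ^ n ≤ B) (hx : 0 < x) (hu : 0 < u)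
    (hxT : ∀ η ∈ T, x ≤ η z) (huT : ∀ η ∈ T, u < η z) :
    ∑ η ∈ T, confWeight α r η ≤
      (x ^ α)⁻¹ * (B * u ^ (1 - α)) * (∑' n, (aZR α n)⁻¹) ^ Fintype.card S := by
  have hB0 : 0 ≤ B := by
    simpa using (mul_nonneg zero_le_one (hr0 z)).trans (by simpa using hB 1 le_rfl)
  have hpow {n : ℕ} (hun : u < n) : r z ^ n ≤ B * u ^ (1 - α) := by
    have hn : (0 : ℝ) < n := hu.trans hun
    calc r z ^ n = (n : ℝ) ^ (1 - α) * ((n : ℝ) ^ (α - 1) * r z ^ n) := by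
          rw [← mul_assoc, ← rpow_add hn, sub_add_sub_cancel', sub_self, rpow_zero, one_mul]
      _ ≤ (n : ℝ) ^ (1 - α) * B :=
        mul_le_mul_of_nonneg_left (hB n (Nat.cast_pos.1 hn)) (rpow_nonneg hn.le _)
      _ ≤ u ^ (1 - α) * B :=
        mul_le_mul_of_nonneg_right (rpow_le_rpow_of_nonpos hu hun.le (by linarith)) hB0
      _ = B * u ^ (1 - α) := mul_comm _ _
  refine (sum_prod_le_mul_prod_sum hT (z := z) (f := fun y n => r y ^ n / aZR α n)
    (fun y n => div_nonneg (pow_nonneg (hr0 y) n) (aZR_pos α n).le) (by positivity)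
    (fun η hη => ?_) (t := fun _ => range (N + 1))
    (fun η hη y _ => Fintype.mem_piFinset.1 (mem_filter.1 (hT hη)).1 y)).trans
    (mul_le_mul_of_nonneg_left (prod_sum_pow_div_aZR_le hα hr0 hr1 _ _) (by positivity))
  rw [div_eq_mul_inv, mul_comm]
  exact mul_le_mul (inv_aZR_le_inv_rpow (by linarith) hx (hxT η hη)) (hpow (huT η hη))
    (pow_nonneg (hr0 z) _) (by positivity)

lemma sum_confWeight_le_of_two_large_sites (hα : 1 < α) (hr0 : ∀ z, 0 ≤ r z)
    (hr1 : ∀ z, r z ≤ 1) {T : Finset (S → ℕ)} (hT : T ⊆ confs S N) {z z' : S} (hz : z' ≠ z)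
    {x u : ℝ} (hx : 0 < x) (hu : 0 < u) (hxT : ∀ η ∈ T, x ≤ η z) (huT : ∀ η ∈ T, u < η z') :
    ∑ η ∈ T, confWeight α r η ≤
      (x ^ α)⁻¹ * (2 ^ α / (α - 1) * u ^ (1 - α)) * (∑' n, (aZR α n)⁻¹) ^ Fintype.card S := by
  set t : S → Finset ℕ := fun y =>
    if y = z' then (range (N + 1)).filter (fun n : ℕ => u < n) else range (N + 1)
  have hA : 0 ≤ (∑' n, (aZR α n)⁻¹) ^ Fintype.card S :=
    pow_nonneg (zero_le_one.trans (one_le_tsum_inv_aZR hα)) _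
  rw [mul_assoc]
  refine (sum_prod_le_mul_prod_sum hT (z := z) (f := fun y n => r y ^ n / aZR α n)
    (fun y n => div_nonneg (pow_nonneg (hr0 y) n) (aZR_pos α n).le) (by positivity)
    (fun η hη => (pow_div_aZR_le_inv (hr0 z) (hr1 z) _).trans
      (inv_aZR_le_inv_rpow (by linarith) hx (hxT η hη))) (t := t) (fun η hη y _ => ?_)).trans
    (mul_le_mul_of_nonneg_left ?_ (by positivity))
  · have hy := Fintype.mem_piFinset.1 (mem_filter.1 (hT hη)).1 y
    by_cases hyz : y = z'
    · subst hyz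
      simp only [t, if_pos rfl]
      exact mem_filter.2 ⟨hy, huT η hη⟩
    · simp only [t, if_neg hyz]
      exact hy
  · rw [← mul_prod_erase _ _ (mem_erase.2 ⟨hz, mem_univ z'⟩)]
    refine mul_le_mul ?_ (prod_sum_pow_div_aZR_le hα hr0 hr1 _ _)
      (prod_nonneg fun y _ => sum_nonneg fun n _ =>
        div_nonneg (pow_nonneg (hr0 y) n) (aZR_pos α n).le) (by positivity)
    simp only [t, if_pos rfl]
    exact (sum_le_sum fun n _ => pow_div_aZR_le_inv (hr0 z') (hr1 z') n).trans
      (sum_filter_lt_inv_aZR_le hα hu _)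

lemma sum_confWeight_le_of_large_sites (hα : 1 < α) (hr0 : ∀ z, 0 ≤ r z) (hr1 : ∀ z, r z ≤ 1)
    {T : Finset (S → ℕ)} (hT : T ⊆ confs S N) {z z' : S} {B x u : ℝ}
    (hB : z' = z → ∀ n : ℕ, 1 ≤ n → (n : ℝ) ^ (α - 1) * r z ^ n ≤ B) (hx : 0 < x) (hu : 0 < u)
    (hxT : ∀ η ∈ T, x ≤ η z) (huT : ∀ η ∈ T, u < η z') :
    ∑ η ∈ T, confWeight α r η ≤ (x ^ α)⁻¹ * (max B (2 ^ α / (α - 1)) * u ^ (1 - α)) *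
      (∑' n, (aZR α n)⁻¹) ^ Fintype.card S := by
  have hA : 0 ≤ (∑' n, (aZR α n)⁻¹) ^ Fintype.card S :=
    pow_nonneg (zero_le_one.trans (one_le_tsum_inv_aZR hα)) _
  rcases eq_or_ne z' z with rfl | hz
  · refine (sum_confWeight_le_of_large_site hα hr0 hr1 hT (hB rfl) hx hu hxT huT).trans ?_
    gcongr
    exact le_max_left _ _
  · refine (sum_confWeight_le_of_two_large_sites hα hr0 hr1 hT hz hx hu hxT huT).trans ?_
    gcongr
    exact le_max_right _ _

theorem exists_sum_confWeight_filter_not_exists_le [Nonempty S] (hα : 1 < α)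
    (hr0 : ∀ z, 0 ≤ r z) (hr1 : ∀ z, r z ≤ 1) (T : Finset S) (hT : ∀ z ∉ T, r z < 1) :
    ∃ C, 0 < C ∧ ∀ ℓ N : ℕ, 0 < ℓ → 2 * ℓ < N →
      (N : ℝ) ^ α * ∑ η ∈ (confs S N).filter (fun η => ¬ ∃ y ∈ T, N - ℓ ≤ η y),
        confWeight α r η ≤ C / (ℓ : ℝ) ^ (α - 1) := by
  set κ := Fintype.card S
  set A := ∑' n, (aZR α n)⁻¹
  have hκ : (0 : ℝ) < κ := Nat.cast_pos.2 Fintype.card_pos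
  have hA : 0 < A := zero_lt_one.trans_le (one_le_tsum_inv_aZR hα)
  obtain ⟨B, hB⟩ := exists_forall_rpow_mul_pow_le (α - 1) hr0
  set K := max B (2 ^ α / (α - 1))
  have hK : 0 < K := lt_max_of_lt_right (div_pos (by positivity) (by linarith))
  refine ⟨κ ^ 2 * κ ^ α * K * A ^ κ * κ ^ (α - 1), by positivity, fun ℓ N hℓ hN => ?_⟩
  set bad := (confs S N).filter (fun η => ¬ ∃ y ∈ T, N - ℓ ≤ η y)
  set x : ℝ := N / κ
  set u : ℝ := ℓ / κ
  have hx : 0 < x := div_pos (Nat.cast_pos.2 (by omega)) hκ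
  have hu : 0 < u := div_pos (Nat.cast_pos.2 hℓ) hκ
  let P : S × S → (S → ℕ) → Prop := fun p η =>
    N ≤ κ * η p.1 ∧ ℓ < κ * η p.2 ∧ (p.2 = p.1 → p.1 ∉ T)
  have hcover : ∀ η ∈ bad, ∃ p ∈ univ, P p η := fun η hη => by
    obtain ⟨hη, hηT⟩ := mem_filter.1 hη
    obtain ⟨z, z', h⟩ := exists_large_sites_of_mem_confs hN hη (by simpa using hηT)
    exact ⟨(z, z'), mem_univ _, h⟩
  have hpair (p : S × S) :
      ∑ η ∈ bad.filter (P p), confWeight α r η ≤ (x ^ α)⁻¹ * (K * u ^ (1 - α)) * A ^ κ := by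
    obtain ⟨z, z'⟩ := p
    by_cases hzT : z' = z ∧ z ∈ T
    · rw [filter_false_of_mem fun η _ hP => hP.2.2 hzT.1 hzT.2, sum_empty]
      positivity
    refine sum_confWeight_le_of_large_sites hα hr0 hr1 ((filter_subset _ _).trans
      (filter_subset _ _)) (fun h => hB z (hT z fun hz => hzT ⟨h, hz⟩)) hx hu (fun η hη => ?_)
      (fun η hη => ?_)
    · rw [div_le_iff₀' hκ]
      exact_mod_cast (mem_filter.1 hη).2.1
    · rw [div_lt_iff₀' hκ]
      exact_mod_cast (mem_filter.1 hη).2.2.1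
  calc (N : ℝ) ^ α * ∑ η ∈ bad, confWeight α r η
      ≤ (N : ℝ) ^ α * ∑ p : S × S, ∑ η ∈ bad.filter (P p), confWeight α r η := by
        gcongr
        exact sum_le_sum_sum_filter_of_forall_exists (fun η _ => confWeight_nonneg hr0 η) P hcover
    _ ≤ (N : ℝ) ^ α * ∑ _p : S × S, (x ^ α)⁻¹ * (K * u ^ (1 - α)) * A ^ κ := by
        gcongr with p
        exact hpair p
    _ = κ ^ 2 * κ ^ α * K * A ^ κ * κ ^ (α - 1) / (ℓ : ℝ) ^ (α - 1) := by
        have hneg : 1 - α = -(α - 1) := by ring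
        rw [sum_const, card_univ, Fintype.card_prod, nsmul_eq_mul, div_rpow (Nat.cast_nonneg _)
          hκ.le, div_rpow (Nat.cast_nonneg _) hκ.le, hneg, rpow_neg (Nat.cast_nonneg _),
          rpow_neg hκ.le]
        have : (0 : ℝ) < (N : ℝ) ^ α := rpow_pos_of_pos (Nat.cast_pos.2 (by omega)) _
        field_simp
        push_cast
        ring

end Estimates

theorem condensate_measure_estimate_general (S : Type*) [Fintype S] [DecidableEq S]
    (α : ℝ) (hα : 1 < α)
    (m : S → ℝ) (hm : ∀ x, 0 < m x)
    (Mstar : ℝ) (hMstar : IsGreatest (Set.range m) Mstar)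
    (Sstar : Finset S) (hSstar : Sstar = Finset.univ.filter (fun x => m x = Mstar))
    (κstar : ℕ) (hκstar : κstar = Sstar.card)
    (mstar : S → ℝ) (hmstar : ∀ x, mstar x = m x / Mstar)
    (Z : ℕ → ℝ)
    (hZ : ∀ N, Z N = (N : ℝ) ^ α *
      ∑ η ∈ confs S N, ∏ x, mstar x ^ η x / aZR α (η x)) :
    ∃ C : ℝ, 0 < C ∧ ∀ ℓ : ℕ, 0 < ℓ → ∀ x ∈ Sstar, ∀ N : ℕ, 2 * ℓ < N →
      |(N : ℝ) ^ α *
          (∑ η ∈ (confs S N).filter (fun η => N - ℓ ≤ η x),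
            ∏ z, mstar z ^ η z / aZR α (η z)) - Z N / (κstar : ℝ)| ≤
        C / (ℓ : ℝ) ^ (α - 1) := by
  obtain ⟨x₀, hx₀⟩ := hMstar.1
  have : Nonempty S := ⟨x₀⟩
  have hM : 0 < Mstar := hx₀ ▸ hm x₀
  have hmstar_nonneg (z : S) : 0 ≤ mstar z := hmstar z ▸ (div_pos (hm z) hM).le
  have hmstar_le (z : S) : mstar z ≤ 1 := hmstar z ▸ (div_le_one hM).2 (hMstar.2 ⟨z, rfl⟩)
  have hmstar_lt (z : S) (hz : z ∉ Sstar) : mstar z < 1 := hmstar z ▸ (div_lt_one hM).2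
    ((hMstar.2 ⟨z, rfl⟩).lt_of_ne (by simpa [hSstar] using hz))
  have hmstar_eq_one {z : S} (hz : z ∈ Sstar) : mstar z = 1 := by
    rw [hmstar, (by simpa [hSstar] using hz : m z = Mstar), div_self hM.ne']
  obtain ⟨C, hC, hbad⟩ :=
    exists_sum_confWeight_filter_not_exists_le hα hmstar_nonneg hmstar_le Sstar hmstar_lt
  refine ⟨C, hC, fun ℓ hℓ x hx N hN => ?_⟩
  set bad := (confs S N).filter (fun η => ¬ ∃ y ∈ Sstar, N - ℓ ≤ η y)
  have hsplit := sum_filter_add_sum_filter_not (confs S N)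
    (fun η => ∃ y ∈ Sstar, N - ℓ ≤ η y) (confWeight α mstar)
  rw [sum_filter_exists_le_eq_card_mul (x := x)
    (fun y hy => by rw [hmstar_eq_one hy, hmstar_eq_one hx]) hN, ← hκstar] at hsplit
  have hκ : 1 ≤ κstar := hκstar ▸ card_pos.2 ⟨x, hx⟩
  have hbad_nonneg : 0 ≤ (N : ℝ) ^ α * ∑ η ∈ bad, confWeight α mstar η :=
    mul_nonneg (by positivity) (sum_nonneg fun η _ => confWeight_nonneg hmstar_nonneg η)
  have hdiff : (N : ℝ) ^ α * ∑ η ∈ (confs S N).filter (fun η => N - ℓ ≤ η x),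
      confWeight α mstar η - Z N / κstar =
      -((N : ℝ) ^ α * (∑ η ∈ bad, confWeight α mstar η) / κstar) := by
    rw [hZ N]
    change _ - _ * (∑ η ∈ confs S N, confWeight α mstar η) / _ = _
    rw [← hsplit]
    field_simp
    ring
  change |(N : ℝ) ^ α * ∑ η ∈ _, confWeight α mstar η - Z N / κstar| ≤ _
  rw [hdiff, abs_neg, abs_of_nonneg (div_nonneg hbad_nonneg (Nat.cast_nonneg _))]
  exact (div_le_self hbad_nonneg (Nat.one_le_cast.2 hκ)).trans (hbad ℓ N hℓ hN)

theorem condensate_measure_estimate (S : Type*) [Fintype S] [DecidableEq S]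
    (hκ : 2 ≤ Fintype.card S) (α : ℝ) (hα : 1 < α)
    (m : S → ℝ) (hm : ∀ x, 0 < m x) (hm1 : ∑ x, m x = 1)
    (Mstar : ℝ) (hMstar : IsGreatest (Set.range m) Mstar)
    (Sstar : Finset S) (hSstar : Sstar = Finset.univ.filter (fun x => m x = Mstar))
    (κstar : ℕ) (hκstar : κstar = Sstar.card)
    (mstar : S → ℝ) (hmstar : ∀ x, mstar x = m x / Mstar)
    (Z : ℕ → ℝ)
    (hZ : ∀ N, Z N = (N : ℝ) ^ α *
      ∑ η ∈ confs S N, ∏ x, mstar x ^ η x / aZR α (η x)) :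
    ∃ C : ℝ, 0 < C ∧ ∀ ℓ : ℕ, 0 < ℓ → ∀ x ∈ Sstar, ∀ N : ℕ, 2 * ℓ < N →
      |(N : ℝ) ^ α *
          (∑ η ∈ (confs S N).filter (fun η => N - ℓ ≤ η x),
            ∏ z, mstar z ^ η z / aZR α (η z)) - Z N / (κstar : ℝ)| ≤
        C / (ℓ : ℝ) ^ (α - 1) :=
  condensate_measure_estimate_general S α hα m hm Mstar hMstar Sstar hSstar κstar hκstar mstar
    hmstar Z hZ
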